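/- Let Λ be a topological space, F : Λ × (0,∞) → (0,∞) such that x ↦ F(x,t) is continuous for each fixed t > 0, let C : Λ → (0,∞) be continuous, and let φ : Λ → (0,∞) satisfy φ(x)^t ≤ F(x,t) ≤ C(x)·φ(x)^t for all x ∈ Λ and all t > 0. Then φ is continuous. -/
import Mathlib


/-- Continuity of the growth index: if `F : Λ × (0,∞) → (0,∞)` is continuous in the
first variable for each fixed `t > 0`, `C : Λ → (0,∞)` is continuous, and
`φ(x)^t ≤ F(x,t) ≤ C(x)·φ(x)^t` for all `x` and `t > 0`, then `φ` is continuous. -/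
theorem stmt4 {Λ : Type*} [TopologicalSpace Λ]
    (F : Λ → ℝ → ℝ) (C φ : Λ → ℝ)
    (hFpos : ∀ x, ∀ t > (0:ℝ), 0 < F x t)
    (hFcont : ∀ t > (0:ℝ), Continuous fun x => F x t)
    (hCpos : ∀ x, 0 < C x) (hCcont : Continuous C)
    (hφpos : ∀ x, 0 < φ x)
    (hlb : ∀ x, ∀ t > (0:ℝ), φ x ^ t ≤ F x t)
    (hub : ∀ x, ∀ t > (0:ℝ), F x t ≤ C x * φ x ^ t) :
    Continuous φ := by
  have key : ∀ x, ∀ t > (0:ℝ), t * Real.log (φ x) ≤ Real.log (F x t) ∧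
      Real.log (F x t) ≤ Real.log (C x) + t * Real.log (φ x) := by
    intro x t ht
    have h1 : Real.log (φ x ^ t) = t * Real.log (φ x) := Real.log_rpow (hφpos x) t
    constructor
    · rw [← h1]
      exact Real.log_le_log (Real.rpow_pos_of_pos (hφpos x) t) (hlb x t ht)
    · have h2 := Real.log_le_log (hFpos x t ht) (hub x t ht)
      rwa [Real.log_mul (hCpos x).ne' (Real.rpow_pos_of_pos (hφpos x) t).ne', h1] at h2
  have hL : Continuous fun x => Real.log (φ x) := by
    rw [continuous_iff_continuousAt]
    intro x₀
    rw [ContinuousAt, Metric.tendsto_nhds]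
    intro ε hε
    set A := Real.log (C x₀ + 1) with hA
    have hA0 : 0 ≤ A := Real.log_nonneg (by linarith [hCpos x₀])
    set t : ℝ := max 1 (A / (ε / 3) + 1) with htdef
    have ht1 : (1:ℝ) ≤ t := le_max_left _ _
    have ht : (0:ℝ) < t := lt_of_lt_of_le one_pos ht1
    have htε : A / t < ε / 3 := by
      rw [div_lt_iff₀ ht]
      have h2 : A / (ε / 3) + 1 ≤ t := le_max_right _ _
      have h3 : A / (ε / 3) < t := by linarith
      rw [div_lt_iff₀ (by linarith : (0:ℝ) < ε / 3)] at h3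
      linarith [h3]
    have hg : Continuous fun x => Real.log (F x t) / t :=
      ((hFcont t ht).log (fun x => (hFpos x t ht).ne')).div_const t
    have h1 : ∀ᶠ x in nhds x₀,
        dist (Real.log (F x t) / t) (Real.log (F x₀ t) / t) < ε / 3 := by
      have := hg.continuousAt (x := x₀)
      rw [ContinuousAt, Metric.tendsto_nhds] at this
      exact this (ε / 3) (by linarith)
    have h2 : ∀ᶠ x in nhds x₀, C x < C x₀ + 1 :=
      (hCcont.continuousAt (x := x₀)).eventually_lt_const (lt_add_one (C x₀))
    filter_upwards [h1, h2] with x hgx hCx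
    rw [Real.dist_eq] at hgx ⊢
    set L : Λ → ℝ := fun x => Real.log (φ x) with hLdef
    set g : Λ → ℝ := fun x => Real.log (F x t) / t with hgdef
    have hgx' : |g x - g x₀| < ε / 3 := hgx
    rw [abs_lt] at hgx'
    have hb1 : ∀ y, L y ≤ g y := by
      intro y
      have := (key y t ht).1
      rw [hgdef]
      simp only
      rw [le_div_iff₀ ht]
      linarith [this]
    have hb2 : ∀ y, g y ≤ Real.log (C y) / t + L y := by
      intro y
      have := (key y t ht).2
      rw [hgdef]
      simp only
      rw [div_le_iff₀ ht]
      have : Real.log (F y t) ≤ Real.log (C y) + t * L y := this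
      have h0 : (Real.log (C y) / t + L y) * t = Real.log (C y) + t * L y := by
        field_simp
      linarith [h0.ge, this]
    have hCxlog : Real.log (C x) / t < ε / 3 := by
      have : Real.log (C x) ≤ A := Real.log_le_log (hCpos x) hCx.le
      calc Real.log (C x) / t ≤ A / t := (div_le_div_iff_of_pos_right ht).mpr this
        _ < ε / 3 := htε
    have hCx₀log : Real.log (C x₀) / t < ε / 3 := by
      have : Real.log (C x₀) ≤ A := Real.log_le_log (hCpos x₀) (by linarith)
      calc Real.log (C x₀) / t ≤ A / t := (div_le_div_iff_of_pos_right ht).mpr this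
        _ < ε / 3 := htε
    have e1 : L x - L x₀ < ε := by
      have := hb1 x
      have := hb2 x₀
      linarith [hgx'.2]
    have e2 : L x₀ - L x < ε := by
      have := hb1 x₀
      have := hb2 x
      linarith [hgx'.1]
    rw [abs_lt]
    constructor <;> linarith
  have hφeq : φ = fun x => Real.exp (Real.log (φ x)) :=
    funext fun x => (Real.exp_log (hφpos x)).symm
  rw [hφeq]
  exact Real.continuous_exp.comp hL
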